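/- arXiv:math/0603267 — 2 statements merged into one kernel-verified Lean document; each statement's English description precedes it below -/
import Mathlib

section
/- Let U and A be bialgebras over a field k and suppose τ : U ⊗ A → k satisfies (A.1)–(A.4) and is convolution invertible. Define σ : (U ⊗ A) ⊗ (U ⊗ A) → k by σ(u ⊗ a, u' ⊗ a') = ε(a) τ(u', a) ε(a'). Then σ is a two-cocycle for the tensor product bialgebra U ⊗ A. -/
/- STATEMENT 3: If `τ : U ⊗ A → k` satisfies (A.1)–(A.4) and is convolution invertible, then
`σ : (U ⊗ A) ⊗ (U ⊗ A) → k`, `σ(u ⊗ a, u' ⊗ a') = ε(u) τ(u', a) ε(a')`, is a two-cocycle for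
the tensor product bialgebra `U ⊗ A`: it is convolution invertible and satisfies
`σ(x₁,y₁)σ(x₂y₂,z) = σ(y₁,z₁)σ(x,y₂z₂)` for all `x, y, z ∈ U ⊗ A`. -/

open TensorProduct Coalgebra

universe u

/-- The representation of `comul a` as a finite sum of pure tensors, with the index type as an
implicit field (the older Mathlib `Coalgebra.Repr`). -/
structure CoalgebraReprOld (R : Type*) {A : Type*}
    [CommSemiring R] [AddCommMonoid A] [Module R A] [CoalgebraStruct R A] (a : A) where
  {ι : Type*}
  (index : Finset ι)
  (left : ι → A)
  (right : ι → A)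
  (eq : ∑ i ∈ index, left i ⊗ₜ[R] right i = CoalgebraStruct.comul a)

/-- convolution product of two functionals on a coalgebra `C`. -/
noncomputable def convolution {k C : Type u} [CommRing k] [AddCommGroup C] [Module k C]
    [Coalgebra k C] (f g : C →ₗ[k] k) : C →ₗ[k] k :=
  LinearMap.mul' k k ∘ₗ TensorProduct.map f g ∘ₗ Coalgebra.comul

/-- the linear form `σ((u ⊗ a) ⊗ (u' ⊗ a')) = ε(u) τ(u' ⊗ a) ε(a')` on `(U ⊗ A) ⊗ (U ⊗ A)`. -/
noncomputable def twistForm {k U A : Type u} [Field k] [Ring U] [Ring A]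
    [Bialgebra k U] [Bialgebra k A] (τ : U ⊗[k] A →ₗ[k] k) :
    (U ⊗[k] A) ⊗[k] (U ⊗[k] A) →ₗ[k] k :=
  τ ∘ₗ TensorProduct.map
      ((TensorProduct.lid k U).toLinearMap ∘ₗ
        TensorProduct.map (Coalgebra.counit : U →ₗ[k] k) LinearMap.id)
      ((TensorProduct.rid k A).toLinearMap ∘ₗ
        TensorProduct.map LinearMap.id (Coalgebra.counit : A →ₗ[k] k))
    ∘ₗ (TensorProduct.tensorTensorTensorComm k U A U A).toLinearMap

/-!
Let `π_U = id ⊗ ε : U ⊗ A → U` and `π_A = ε ⊗ id : U ⊗ A → A`; both are bialgebra maps, and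
`σ(x, y) = τ(π_U y, π_A x)`. Thus `σ = τ ∘ φ` for the coalgebra map `φ(x ⊗ y) = π_U y ⊗ π_A x`,
and `τ⁻¹ ∘ φ` is a convolution inverse of `σ`. In the cocycle identity, `(π_U ⊗ π_A) ∘ Δ = id`
collapses the sum over the coproduct of `y`, reducing it to `y = v ⊗ b`. Writing `a = π_A x`
and `w = π_U z`, (A.1) expands `τ(w, a₂ b)` and (A.3) expands `τ(v w₂, a)`, and both sides
become `∑ τ(v, a₁) τ(w₁, b) τ(w₂, a₂)`.
-/

universe w

namespace CoalgebraReprOld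

variable {R C : Type*} [CommSemiring R] [AddCommMonoid C] [Module R C] [CoalgebraStruct R C]

-- Indexed by `Fin n`, so that the index type can be put in any universe.
variable (R) in
noncomputable def arbitrary (c : C) : CoalgebraReprOld.{_, _, w} R c where
  ι := ULift.{w} (Fin (ℛ R c).index.card)
  index := Finset.univ
  left i := (ℛ R c).left ((ℛ R c).index.equivFin.symm i.down)
  right i := (ℛ R c).right ((ℛ R c).index.equivFin.symm i.down)
  eq := by
    rw [← (ℛ R c).eq, ← Finset.sum_coe_sort (ℛ R c).index]
    exact Fintype.sum_equiv (Equiv.ulift.trans (ℛ R c).index.equivFin.symm) _ _ fun _ => rfl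

end CoalgebraReprOld

lemma Coalgebra.sum_smul_counit {R C ι : Type*} [CommSemiring R] [AddCommMonoid C] [Module R C]
    [Coalgebra R C] {c : C} (𝓡 : Coalgebra.Repr R c ι) :
    ∑ i ∈ 𝓡.index, counit (R := R) (𝓡.right i) • 𝓡.left i = c := by
  simpa only [map_sum, _root_.TensorProduct.rid_tmul, one_smul] using
    congr(_root_.TensorProduct.rid R C $(sum_tmul_counit_eq 𝓡))

section Convolution

variable {k C D : Type u} [CommRing k] [AddCommGroup C] [Module k C] [Coalgebra k C]
  [AddCommGroup D] [Module k D] [Coalgebra k D]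

lemma convolution_apply_eq_sum {c : C} (r : CoalgebraReprOld k c) (f g : C →ₗ[k] k) :
    convolution f g c = ∑ i ∈ r.index, f (r.left i) * g (r.right i) := by
  simp [convolution, ← r.eq, map_sum]

lemma convolution_comp_coalgHom (φ : D →ₗc[k] C) (f g : C →ₗ[k] k) :
    convolution (f ∘ₗ φ) (g ∘ₗ φ) = convolution f g ∘ₗ (φ : D →ₗ[k] C) := by
  simp only [convolution, TensorProduct.map_comp, LinearMap.comp_assoc,
    CoalgHomClass.map_comp_comul]

lemma convolution_comp_coalgHom_eq_counit (φ : D →ₗc[k] C) {f g : C →ₗ[k] k}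
    (h : convolution f g = counit) :
    convolution (f ∘ₗ (φ : D →ₗ[k] C)) (g ∘ₗ (φ : D →ₗ[k] C)) = counit := by
  rw [convolution_comp_coalgHom, h]
  exact CoalgHomClass.counit_comp φ

end Convolution

section TensorBialgebra

open TensorProduct (mk)

variable {k U A : Type u} [Field k] [Ring U] [Ring A] [Bialgebra k U] [Bialgebra k A]

variable (k U A) in
noncomputable def projFst : U ⊗[k] A →ₐc[k] U :=
  (Bialgebra.TensorProduct.rid k k U : U ⊗[k] k →ₐc[k] U).comp
    (BialgHom.lTensor U (Bialgebra.counitBialgHom k A))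

variable (k U A) in
noncomputable def projSnd : U ⊗[k] A →ₐc[k] A :=
  (Bialgebra.TensorProduct.lid k A : k ⊗[k] A →ₐc[k] A).comp
    (BialgHom.rTensor A (Bialgebra.counitBialgHom k U))

@[simp]
lemma projFst_tmul (u : U) (a : A) : projFst k U A (u ⊗ₜ a) = counit (R := k) a • u := rfl

@[simp]
lemma projSnd_tmul (u : U) (a : A) : projSnd k U A (u ⊗ₜ a) = counit (R := k) u • a := rfl

lemma map_projFst_projSnd_comul (y : U ⊗[k] A) :
    TensorProduct.map (projFst k U A : U ⊗[k] A →ₗ[k] U)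
      (projSnd k U A : U ⊗[k] A →ₗ[k] A) (comul y) = y := by
  induction y using TensorProduct.induction_on with
  | zero => simp
  | tmul u a =>
    conv_rhs => rw [← sum_smul_counit (ℛ k u), ← sum_counit_smul (ℛ k a)]
    rw [TensorProduct.comul_tmul, ← (ℛ k u).eq, ← (ℛ k a).eq]
    simp [sum_tmul, tmul_sum, Finset.smul_sum, smul_tmul', smul_smul, mul_comm]
  | add y y' hy hy' => simp only [map_add, hy, hy']

lemma comm_map_projSnd_projFst_comul (y : U ⊗[k] A) :
    TensorProduct.comm k A U (TensorProduct.map (projSnd k U A : U ⊗[k] A →ₗ[k] A)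
      (projFst k U A : U ⊗[k] A →ₗ[k] U) (comul y)) = y := by
  induction y using TensorProduct.induction_on with
  | zero => simp
  | tmul u a =>
    conv_rhs => rw [← sum_counit_smul (ℛ k u), ← sum_smul_counit (ℛ k a)]
    rw [TensorProduct.comul_tmul, ← (ℛ k u).eq, ← (ℛ k a).eq]
    simp [sum_tmul, tmul_sum, Finset.smul_sum, smul_tmul', smul_smul, mul_comm]
  | add y y' hy hy' => simp only [map_add, hy, hy']

lemma CoalgebraReprOld.sum_projFst_projSnd {y : U ⊗[k] A} (r : CoalgebraReprOld k y)
    {M : Type*} [AddCommMonoid M] [Module k M] (B : U →ₗ[k] A →ₗ[k] M) :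
    ∑ i ∈ r.index, B (projFst k U A (r.left i)) (projSnd k U A (r.right i)) =
      TensorProduct.lift B y := by
  conv_rhs => rw [← map_projFst_projSnd_comul y, ← r.eq]
  simp [map_sum]

lemma CoalgebraReprOld.sum_projSnd_projFst {y : U ⊗[k] A} (r : CoalgebraReprOld k y)
    {M : Type*} [AddCommMonoid M] [Module k M] (B : U →ₗ[k] A →ₗ[k] M) :
    ∑ i ∈ r.index, B (projFst k U A (r.right i)) (projSnd k U A (r.left i)) =
      TensorProduct.lift B y := by
  conv_rhs => rw [← comm_map_projSnd_projFst_comul y, ← r.eq]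
  simp [map_sum]

variable (k U A) in
noncomputable def twistMap : (U ⊗[k] A) ⊗[k] (U ⊗[k] A) →ₐc[k] U ⊗[k] A :=
  (Bialgebra.TensorProduct.map (projFst k U A) (projSnd k U A)).comp
    (Bialgebra.TensorProduct.comm k (U ⊗[k] A) (U ⊗[k] A) : _ →ₐc[k] _)

@[simp]
lemma twistMap_tmul (x y : U ⊗[k] A) :
    twistMap k U A (x ⊗ₜ y) = projFst k U A y ⊗ₜ projSnd k U A x :=
  rfl

lemma twistForm_eq_comp (τ : U ⊗[k] A →ₗ[k] k) :
    twistForm τ =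
      τ ∘ₗ (twistMap k U A : (U ⊗[k] A) ⊗[k] (U ⊗[k] A) →ₗ[k] U ⊗[k] A) := by
  ext u a u' a'
  simp [twistForm, ← smul_tmul', smul_smul, mul_comm]

lemma twistForm_tmul (τ : U ⊗[k] A →ₗ[k] k) (x y : U ⊗[k] A) :
    twistForm τ (x ⊗ₜ y) = τ (projFst k U A y ⊗ₜ projSnd k U A x) := by
  rw [twistForm_eq_comp]
  rfl

variable {τ : U ⊗[k] A →ₗ[k] k}

lemma comp_flip_mk_mul_eq_convolution
    (hA1 : ∀ (u : U) (a a' : A) (r : CoalgebraReprOld.{_, _, w} k u),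
      τ (u ⊗ₜ (a * a')) = ∑ i ∈ r.index, τ (r.right i ⊗ₜ a) * τ (r.left i ⊗ₜ a'))
    (a a' : A) :
    τ ∘ₗ (mk k U A).flip (a * a') =
      convolution (τ ∘ₗ (mk k U A).flip a') (τ ∘ₗ (mk k U A).flip a) := by
  ext u
  let r : CoalgebraReprOld.{_, _, w} k u := .arbitrary k u
  simp [convolution_apply_eq_sum r, hA1 u a a' r, mul_comm]

lemma comp_mk_mul_eq_convolution
    (hA3 : ∀ (u u' : U) (a : A) (r : CoalgebraReprOld.{_, _, w} k a),
      τ ((u * u') ⊗ₜ a) = ∑ i ∈ r.index, τ (u ⊗ₜ r.left i) * τ (u' ⊗ₜ r.right i))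
    (u u' : U) :
    τ ∘ₗ mk k U A (u * u') = convolution (τ ∘ₗ mk k U A u) (τ ∘ₗ mk k U A u') := by
  ext a
  let r : CoalgebraReprOld.{_, _, w} k a := .arbitrary k a
  simp [convolution_apply_eq_sum r, hA3 u u' a r]

lemma apply_projFst_tmul_mul
    (hA1 : ∀ a a' : A, τ ∘ₗ (mk k U A).flip (a * a') =
      convolution (τ ∘ₗ (mk k U A).flip a') (τ ∘ₗ (mk k U A).flip a))
    {z : U ⊗[k] A} (r : CoalgebraReprOld k z) (a a' : A) :
    τ (projFst k U A z ⊗ₜ (a * a')) =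
      ∑ i ∈ r.index,
        τ (projFst k U A (r.left i) ⊗ₜ a') * τ (projFst k U A (r.right i) ⊗ₜ a) := by
  calc τ (projFst k U A z ⊗ₜ (a * a'))
      = (τ ∘ₗ (mk k U A).flip (a * a')) (projFst k U A z) := rfl
    _ = convolution
          ((τ ∘ₗ (mk k U A).flip a') ∘ₗ (projFst k U A : U ⊗[k] A →ₗc[k] U))
          ((τ ∘ₗ (mk k U A).flip a) ∘ₗ (projFst k U A : U ⊗[k] A →ₗc[k] U)) z := by
        rw [hA1, convolution_comp_coalgHom]
        rfl
    _ = _ := convolution_apply_eq_sum r _ _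

lemma apply_mul_tmul_projSnd
    (hA3 : ∀ u u' : U, τ ∘ₗ mk k U A (u * u') =
      convolution (τ ∘ₗ mk k U A u) (τ ∘ₗ mk k U A u'))
    {x : U ⊗[k] A} (r : CoalgebraReprOld k x) (u u' : U) :
    τ ((u * u') ⊗ₜ projSnd k U A x) =
      ∑ i ∈ r.index,
        τ (u ⊗ₜ projSnd k U A (r.left i)) * τ (u' ⊗ₜ projSnd k U A (r.right i)) := by
  calc τ ((u * u') ⊗ₜ projSnd k U A x)
      = (τ ∘ₗ mk k U A (u * u')) (projSnd k U A x) := rfl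
    _ = convolution ((τ ∘ₗ mk k U A u) ∘ₗ (projSnd k U A : U ⊗[k] A →ₗc[k] A))
          ((τ ∘ₗ mk k U A u') ∘ₗ (projSnd k U A : U ⊗[k] A →ₗc[k] A)) x := by
        rw [hA3, convolution_comp_coalgHom]
        rfl
    _ = _ := convolution_apply_eq_sum r _ _

-- The cocycle identity for `y = v ⊗ₜ b`, rewritten with `twistForm_tmul`.
lemma twistForm_cocycle_tmul
    (hA1 : ∀ a a' : A, τ ∘ₗ (mk k U A).flip (a * a') =
      convolution (τ ∘ₗ (mk k U A).flip a') (τ ∘ₗ (mk k U A).flip a))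
    (hA3 : ∀ u u' : U, τ ∘ₗ mk k U A (u * u') =
      convolution (τ ∘ₗ mk k U A u) (τ ∘ₗ mk k U A u'))
    {x z : U ⊗[k] A} (rx : CoalgebraReprOld k x) (rz : CoalgebraReprOld k z) (v : U) (b : A) :
    ∑ i ∈ rx.index, τ (v ⊗ₜ projSnd k U A (rx.left i)) *
        τ (projFst k U A z ⊗ₜ (projSnd k U A (rx.right i) * b)) =
      ∑ l ∈ rz.index, τ (projFst k U A (rz.left l) ⊗ₜ b) *
        τ ((v * projFst k U A (rz.right l)) ⊗ₜ projSnd k U A x) := by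
  simp only [apply_projFst_tmul_mul hA1 rz, apply_mul_tmul_projSnd hA3 rx, Finset.mul_sum]
  rw [Finset.sum_comm]
  exact Finset.sum_congr rfl fun _ _ => Finset.sum_congr rfl fun _ _ => by ring

theorem twistForm_cocycle
    (hA1 : ∀ a a' : A, τ ∘ₗ (mk k U A).flip (a * a') =
      convolution (τ ∘ₗ (mk k U A).flip a') (τ ∘ₗ (mk k U A).flip a))
    (hA3 : ∀ u u' : U, τ ∘ₗ mk k U A (u * u') =
      convolution (τ ∘ₗ mk k U A u) (τ ∘ₗ mk k U A u'))
    {x y z : U ⊗[k] A} (rx : CoalgebraReprOld k x) (ry : CoalgebraReprOld k y)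
    (rz : CoalgebraReprOld k z) :
    ∑ i ∈ rx.index, ∑ j ∈ ry.index,
        twistForm τ (rx.left i ⊗ₜ ry.left j) *
          twistForm τ ((rx.right i * ry.right j) ⊗ₜ z) =
      ∑ j ∈ ry.index, ∑ l ∈ rz.index,
        twistForm τ (ry.left j ⊗ₜ rz.left l) *
          twistForm τ (x ⊗ₜ (ry.right j * rz.right l)) := by
  let B : U →ₗ[k] A →ₗ[k] k := ∑ i ∈ rx.index, (LinearMap.mul k k).compl₁₂
    (τ ∘ₗ (mk k U A).flip (projSnd k U A (rx.left i)))
    (τ ∘ₗ mk k U A (projFst k U A z) ∘ₗ LinearMap.mulLeft k (projSnd k U A (rx.right i)))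
  let C : U →ₗ[k] A →ₗ[k] k := ∑ l ∈ rz.index, (LinearMap.mul k k).flip.compl₁₂
    (τ ∘ₗ (mk k U A).flip (projSnd k U A x) ∘ₗ
      LinearMap.mulRight k (projFst k U A (rz.right l)))
    (τ ∘ₗ mk k U A (projFst k U A (rz.left l)))
  calc _ = TensorProduct.lift B y := by
          rw [← ry.sum_projFst_projSnd, Finset.sum_comm]
          simp [B, twistForm_tmul]
    _ = TensorProduct.lift C y := by
          congr 1
          ext v b
          simpa [B, C, mul_comm] using twistForm_cocycle_tmul hA1 hA3 rx rz v b
    _ = _ := by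
          rw [← ry.sum_projSnd_projFst]
          simp [C, twistForm_tmul, mul_comm]

end TensorBialgebra

theorem stmt_3_general {k U A : Type u} [Field k] [Ring U] [Ring A]
    [Bialgebra k U] [Bialgebra k A]
    (τ τinv : U ⊗[k] A →ₗ[k] k)
    -- (A.1)–(A.4)
    (hA1 : ∀ (u : U) (a a' : A) (r : CoalgebraReprOld k u),
      τ (u ⊗ₜ (a * a')) = ∑ i ∈ r.index, τ (r.right i ⊗ₜ a) * τ (r.left i ⊗ₜ a'))
    (hA3 : ∀ (u u' : U) (a : A) (r : CoalgebraReprOld k a),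
      τ ((u * u') ⊗ₜ a) = ∑ i ∈ r.index, τ (u ⊗ₜ r.left i) * τ (u' ⊗ₜ r.right i))
    -- `τ` is convolution invertible
    (hinv₁ : convolution τ τinv = (Coalgebra.counit : U ⊗[k] A →ₗ[k] k))
    (hinv₂ : convolution τinv τ = (Coalgebra.counit : U ⊗[k] A →ₗ[k] k)) :
    -- `σ = twistForm τ` is a two-cocycle for the tensor product bialgebra `U ⊗ A`:
    (∃ σinv : (U ⊗[k] A) ⊗[k] (U ⊗[k] A) →ₗ[k] k,
      convolution (twistForm τ) σinv
          = (Coalgebra.counit : (U ⊗[k] A) ⊗[k] (U ⊗[k] A) →ₗ[k] k) ∧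
      convolution σinv (twistForm τ)
          = (Coalgebra.counit : (U ⊗[k] A) ⊗[k] (U ⊗[k] A) →ₗ[k] k)) ∧
    (∀ (x y z : U ⊗[k] A) (rx : CoalgebraReprOld k x) (ry : CoalgebraReprOld k y)
        (rz : CoalgebraReprOld k z),
      ∑ i ∈ rx.index, ∑ j ∈ ry.index,
        twistForm τ (rx.left i ⊗ₜ ry.left j) *
          twistForm τ ((rx.right i * ry.right j) ⊗ₜ z)
      = ∑ j ∈ ry.index, ∑ l ∈ rz.index,
        twistForm τ (ry.left j ⊗ₜ rz.left l) *
          twistForm τ (x ⊗ₜ (ry.right j * rz.right l))) := by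
  have hA1' := comp_flip_mk_mul_eq_convolution hA1
  have hA3' := comp_mk_mul_eq_convolution hA3
  refine ⟨⟨twistForm τinv, ?_, ?_⟩,
    fun x y z rx ry rz => twistForm_cocycle hA1' hA3' rx ry rz⟩
  · rw [twistForm_eq_comp, twistForm_eq_comp]
    exact convolution_comp_coalgHom_eq_counit _ hinv₁
  · rw [twistForm_eq_comp, twistForm_eq_comp]
    exact convolution_comp_coalgHom_eq_counit _ hinv₂

theorem stmt_3 {k U A : Type u} [Field k] [Ring U] [Ring A]
    [Bialgebra k U] [Bialgebra k A]
    (τ τinv : U ⊗[k] A →ₗ[k] k)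
    -- (A.1)–(A.4)
    (hA1 : ∀ (u : U) (a a' : A) (r : CoalgebraReprOld k u),
      τ (u ⊗ₜ (a * a')) = ∑ i ∈ r.index, τ (r.right i ⊗ₜ a) * τ (r.left i ⊗ₜ a'))
    (hA2 : ∀ a : A, τ (1 ⊗ₜ a) = Coalgebra.counit a)
    (hA3 : ∀ (u u' : U) (a : A) (r : CoalgebraReprOld k a),
      τ ((u * u') ⊗ₜ a) = ∑ i ∈ r.index, τ (u ⊗ₜ r.left i) * τ (u' ⊗ₜ r.right i))
    (hA4 : ∀ u : U, τ (u ⊗ₜ (1 : A)) = Coalgebra.counit u)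
    -- `τ` is convolution invertible
    (hinv₁ : convolution τ τinv = (Coalgebra.counit : U ⊗[k] A →ₗ[k] k))
    (hinv₂ : convolution τinv τ = (Coalgebra.counit : U ⊗[k] A →ₗ[k] k)) :
    -- `σ = twistForm τ` is a two-cocycle for the tensor product bialgebra `U ⊗ A`:
    (∃ σinv : (U ⊗[k] A) ⊗[k] (U ⊗[k] A) →ₗ[k] k,
      convolution (twistForm τ) σinv
          = (Coalgebra.counit : (U ⊗[k] A) ⊗[k] (U ⊗[k] A) →ₗ[k] k) ∧
      convolution σinv (twistForm τ)
          = (Coalgebra.counit : (U ⊗[k] A) ⊗[k] (U ⊗[k] A) →ₗ[k] k)) ∧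
    (∀ (x y z : U ⊗[k] A) (rx : CoalgebraReprOld k x) (ry : CoalgebraReprOld k y)
        (rz : CoalgebraReprOld k z),
      ∑ i ∈ rx.index, ∑ j ∈ ry.index,
        twistForm τ (rx.left i ⊗ₜ ry.left j) *
          twistForm τ ((rx.right i * ry.right j) ⊗ₜ z)
      = ∑ j ∈ ry.index, ∑ l ∈ rz.index,
        twistForm τ (ry.left j ⊗ₜ rz.left l) *
          twistForm τ (x ⊗ₜ (ry.right j * rz.right l))) :=
  stmt_3_general τ τinv hA1 hA3 hinv₁ hinv₂
end

section
/- Let H be a Hopf algebra over k and let (C, Δ, ε) be a coalgebra in the category ᴴᴴYD. Then the set C^r of all functionals c* ∈ C* that vanish on I·C for some cofinite ideal I of H is a subalgebra of the dual algebra C*; that is, ε ∈ C^r and if a, b ∈ C^r then the convolution product ab (defined by (ab)(c) = a(c⁽¹⁾)b(c⁽²⁾)) lies in C^r. -/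
/- STATEMENT 10: Let `H` be a Hopf algebra over `k` and `(C, Δ, ε)` a coalgebra in the
category of Yetter–Drinfel'd modules over `H` (so `C` is a left `H`-module, `Δ` is
`H`-linear and `ε(h·c) = ε_H(h) ε_C(c)`).  Then the set `C^r` of functionals `p ∈ C*`
vanishing on `I·C` for some cofinite (two-sided) ideal `I` of `H` is a subalgebra of the dual
(convolution) algebra `C*`: the counit `ε` lies in `C^r`, and `C^r` is closed under the
convolution product `(pq)(c) = p(c⁽¹⁾) q(c⁽²⁾)`. -/

open TensorProduct Coalgebra

universe u

/-- `p` vanishes on `I·C` for some cofinite two-sided ideal `I` of `H`. -/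
def VanishesOnCofiniteIdeal {k H C : Type u} [Field k] [Ring H] [Algebra k H]
    [AddCommGroup C] [Module k C] (act : H ⊗[k] C →ₗ[k] C) (p : C →ₗ[k] k) : Prop :=
  ∃ I : Submodule k H,
    (∀ x ∈ I, ∀ h : H, h * x ∈ I ∧ x * h ∈ I) ∧
    FiniteDimensional k (H ⧸ I) ∧
    (∀ x ∈ I, ∀ c : C, p (act (x ⊗ₜ c)) = 0)

/- A functional `p` lies in `C^r` exactly when its coefficient map `h ↦ p(h · -) : H → C*`
factors through an algebra map from `H` into a finite-dimensional algebra: the kernel of such a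
map is a cofinite ideal, and conversely `H ⧸ I` is such an algebra. For `ε` the counit
`H → k` does it. For `pq`, `H`-linearity of `Δ` says that the coefficient map of `pq` is the
tensor product of those of `p` and `q` precomposed with `Δ_H`, so it factors through
`H → H ⧸ I ⊗ H ⧸ J`, the comultiplication followed by the two quotient maps. -/

section

variable {k H C : Type u} [Field k] [Ring H] [Algebra k H] [AddCommGroup C] [Module k C]
  {act : H ⊗[k] C →ₗ[k] C} {p : C →ₗ[k] k}

theorem vanishesOnCofiniteIdeal_of_factors {B : Type*} [Ring B] [Algebra k B]
    [FiniteDimensional k B] (f : H →ₐ[k] B) (P : B →ₗ[k] Module.Dual k C)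
    (hP : P ∘ₗ f.toLinearMap = curry (p ∘ₗ act)) : VanishesOnCofiniteIdeal act p := by
  refine ⟨LinearMap.ker f.toLinearMap, fun x hx h => ?_, ?_, fun x hx c => ?_⟩
  · have hx : f x = 0 := hx
    exact ⟨show f (h * x) = 0 by rw [map_mul, hx, mul_zero],
      show f (x * h) = 0 by rw [map_mul, hx, zero_mul]⟩
  · exact (LinearMap.quotKerEquivRange f.toLinearMap).symm.finiteDimensional
  · calc p (act (x ⊗ₜ c)) = P (f x) c := (LinearMap.congr_fun₂ hP x c).symm
      _ = 0 := by rw [show f x = 0 from hx, LinearMap.map_zero, LinearMap.zero_apply]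

theorem VanishesOnCofiniteIdeal.exists_factors (hp : VanishesOnCofiniteIdeal act p) :
    ∃ (I : Ideal H) (_ : I.IsTwoSided), FiniteDimensional k (H ⧸ I) ∧
      ∃ P : H ⧸ I →ₗ[k] Module.Dual k C,
        P ∘ₗ (Ideal.Quotient.mkₐ k I).toLinearMap = curry (p ∘ₗ act) := by
  obtain ⟨I, hI, hfin, hpI⟩ := hp
  let J : Ideal H := { I.toAddSubmonoid with smul_mem' := fun h x hx => (hI x hx h).1 }
  have hJ : J.IsTwoSided := ⟨fun h hx => (hI _ hx h).2⟩
  have : FiniteDimensional k (H ⧸ J.restrictScalars k) := hfin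
  refine ⟨J, hJ, (Submodule.Quotient.restrictScalarsEquiv k J).finiteDimensional,
    (J.restrictScalars k).liftQ (curry (p ∘ₗ act)) (fun x hx => LinearMap.ext (hpI x hx)) ∘ₗ
      (Submodule.Quotient.restrictScalarsEquiv k J).symm.toLinearMap, ?_⟩
  ext x c
  rfl

end

theorem curry_convolution_comp_act {k H C : Type*} [CommRing k] [AddCommMonoid H] [Module k H]
    [Coalgebra k H] [AddCommMonoid C] [Module k C] {act : H ⊗[k] C →ₗ[k] C}
    {Δ : C →ₗ[k] C ⊗[k] C}
    (hΔlin : Δ ∘ₗ act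
      = (TensorProduct.map act act
          ∘ₗ (TensorProduct.tensorTensorTensorComm k H H C C).toLinearMap
          ∘ₗ TensorProduct.map (Coalgebra.comul : H →ₗ[k] H ⊗[k] H) LinearMap.id)
        ∘ₗ TensorProduct.map LinearMap.id Δ)
    (p q : C →ₗ[k] k) :
    curry ((LinearMap.mul' k k ∘ₗ TensorProduct.map p q ∘ₗ Δ) ∘ₗ act) =
      Δ.dualMap ∘ₗ dualDistrib k C C ∘ₗ
        TensorProduct.map (curry (p ∘ₗ act)) (curry (q ∘ₗ act)) ∘ₗ comul := by
  ext x c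
  have hΔ := LinearMap.congr_fun hΔlin (x ⊗ₜ c)
  simp only [LinearMap.comp_apply, TensorProduct.map_tmul, LinearMap.id_apply] at hΔ
  simp only [LinearMap.comp_apply, curry_apply, hΔ, LinearMap.dualMap_apply]
  induction (comul x : H ⊗[k] H) using TensorProduct.induction_on with
  | zero => simp
  | tmul g h =>
    induction Δ c using TensorProduct.induction_on with
    | zero => simp
    | tmul a b => simp
    | add _ _ ha hb => simp_all [tmul_add]
  | add _ _ ha hb => simp_all [add_tmul]

theorem stmt_10_general {k H C : Type u} [Field k] [Ring H] [HopfAlgebra k H]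
    [AddCommGroup C] [Module k C]
    (act : H ⊗[k] C →ₗ[k] C)
    (Δ : C →ₗ[k] C ⊗[k] C) (ε : C →ₗ[k] k)
    -- `Δ` is a map of left `H`-modules (`Δ(h·c) = h₁·c⁽¹⁾ ⊗ h₂·c⁽²⁾`) …
    (hΔlin : Δ ∘ₗ act
      = (TensorProduct.map act act
          ∘ₗ (TensorProduct.tensorTensorTensorComm k H H C C).toLinearMap
          ∘ₗ TensorProduct.map (Coalgebra.comul : H →ₗ[k] H ⊗[k] H) LinearMap.id)
        ∘ₗ TensorProduct.map LinearMap.id Δ)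
    -- … and `ε(h·c) = ε_H(h) ε_C(c)`:
    (hεlin : ε ∘ₗ act
      = LinearMap.mul' k k ∘ₗ TensorProduct.map (Coalgebra.counit : H →ₗ[k] k) ε) :
    -- `C^r` is a subalgebra of the dual algebra `C*`:
    VanishesOnCofiniteIdeal act ε ∧
    (∀ p q : C →ₗ[k] k, VanishesOnCofiniteIdeal act p → VanishesOnCofiniteIdeal act q →
      VanishesOnCofiniteIdeal act (LinearMap.mul' k k ∘ₗ TensorProduct.map p q ∘ₗ Δ)) := by
  constructor
  · refine vanishesOnCofiniteIdeal_of_factors (Bialgebra.counitAlgHom k H)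
      (LinearMap.smulRight LinearMap.id ε) ?_
    ext x c
    simpa [mul_comm] using (LinearMap.congr_fun hεlin (x ⊗ₜ c)).symm
  · rintro p q hp hq
    obtain ⟨I, _, _, P, hP⟩ := hp.exists_factors
    obtain ⟨J, _, _, Q, hQ⟩ := hq.exists_factors
    refine vanishesOnCofiniteIdeal_of_factors
      ((Algebra.TensorProduct.map (Ideal.Quotient.mkₐ k I) (Ideal.Quotient.mkₐ k J)).comp
        (Bialgebra.comulAlgHom k H))
      (Δ.dualMap ∘ₗ dualDistrib k C C ∘ₗ TensorProduct.map P Q) ?_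
    rw [curry_convolution_comp_act hΔlin, ← hP, ← hQ, TensorProduct.map_comp]
    rfl

theorem stmt_10 {k H C : Type u} [Field k] [Ring H] [HopfAlgebra k H]
    [AddCommGroup C] [Module k C]
    (act : H ⊗[k] C →ₗ[k] C)
    (Δ : C →ₗ[k] C ⊗[k] C) (ε : C →ₗ[k] k)
    -- `C` is a left `H`-module:
    (hact1 : ∀ c : C, act ((1 : H) ⊗ₜ c) = c)
    (hact2 : ∀ (g h : H) (c : C), act ((g * h) ⊗ₜ c) = act (g ⊗ₜ act (h ⊗ₜ c)))
    -- `(C, Δ, ε)` is a coalgebra: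
    (hcoassoc : TensorProduct.map Δ LinearMap.id ∘ₗ Δ
      = (TensorProduct.assoc k C C C).symm.toLinearMap ∘ₗ TensorProduct.map LinearMap.id Δ ∘ₗ Δ)
    (hcounit₁ : (TensorProduct.lid k C).toLinearMap ∘ₗ TensorProduct.map ε LinearMap.id ∘ₗ Δ
      = LinearMap.id)
    (hcounit₂ : (TensorProduct.rid k C).toLinearMap ∘ₗ TensorProduct.map LinearMap.id ε ∘ₗ Δ
      = LinearMap.id)
    -- `Δ` is a map of left `H`-modules (`Δ(h·c) = h₁·c⁽¹⁾ ⊗ h₂·c⁽²⁾`) …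
    (hΔlin : Δ ∘ₗ act
      = (TensorProduct.map act act
          ∘ₗ (TensorProduct.tensorTensorTensorComm k H H C C).toLinearMap
          ∘ₗ TensorProduct.map (Coalgebra.comul : H →ₗ[k] H ⊗[k] H) LinearMap.id)
        ∘ₗ TensorProduct.map LinearMap.id Δ)
    -- … and `ε(h·c) = ε_H(h) ε_C(c)`:
    (hεlin : ε ∘ₗ act
      = LinearMap.mul' k k ∘ₗ TensorProduct.map (Coalgebra.counit : H →ₗ[k] k) ε) :
    -- `C^r` is a subalgebra of the dual algebra `C*`:
    VanishesOnCofiniteIdeal act ε ∧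
    (∀ p q : C →ₗ[k] k, VanishesOnCofiniteIdeal act p → VanishesOnCofiniteIdeal act q →
      VanishesOnCofiniteIdeal act (LinearMap.mul' k k ∘ₗ TensorProduct.map p q ∘ₗ Δ)) :=
  stmt_10_general act Δ ε hΔlin hεlin
end
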